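/- arXiv:1603.00978 — 3 statements merged into one kernel-verified Lean document; each statement's English description precedes it below -/
import Mathlib

section
/- Let M be the free monoid on generators {m_i : i ∈ ℕ}, and let C = A ∪ B where A = {a_n : n ∈ ℕ} and B = {b_n : n ∈ ℕ} are disjoint countable sets. Define the M-action on C by: m_n sends a_n to b_n, fixes a_k for k ≠ n, and fixes every b_k. Then every injective M-equivariant map F : C → C is the identity. -/
/-- The M-Set `C = A ⊕ B` (with `Sum.inl n = aₙ`, `Sum.inr n = bₙ`) for the free monoid
on generators `{mₙ : n ∈ ℕ}`: `act n` is the action of the generator `mₙ`, sending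
`aₙ` to `bₙ`, fixing `aₖ` for `k ≠ n` and fixing every `bₖ`. An action of the free
monoid is determined by (and equivariance is equivalent to equivariance with respect to)
the actions of the generators. -/
def act (n : ℕ) : ℕ ⊕ ℕ → ℕ ⊕ ℕ
  | Sum.inl k => if k = n then Sum.inr n else Sum.inl k
  | Sum.inr k => Sum.inr k

/-- Every injective M-equivariant map `F : C → C` is the identity. -/
theorem every_injective_equivariant_is_id (F : ℕ ⊕ ℕ → ℕ ⊕ ℕ)
    (hinj : Function.Injective F)
    (hequiv : ∀ n x, F (act n x) = act n (F x)) :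
    F = id := by
  have key : ∀ k, F (Sum.inl k) = Sum.inl k ∧ F (Sum.inr k) = Sum.inr k := by
    intro k
    have h := hequiv k (Sum.inl k)
    simp only [act, if_pos rfl] at h
    cases hFl : F (Sum.inl k) with
    | inl j =>
      rw [hFl] at h
      by_cases hj : j = k
      · subst hj
        simp only [act, if_pos rfl] at h
        exact ⟨rfl, h⟩
      · simp only [act, if_neg hj] at h
        have := hinj (h.trans hFl.symm)
        simp at this
    | inr j =>
      rw [hFl] at h
      simp only [act] at h
      have := hinj (h.trans hFl.symm)
      simp at this
  funext x
  cases x with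
  | inl k => exact (key k).1
  | inr k => exact (key k).2
end

section
/- With the M-Set C as above (m_n maps a_n to b_n, fixes other a_k and all b_k), the subset B = {b_n : n ∈ ℕ} is a sub-M-Set of C, and B admits an injective M-equivariant endomorphism that is not surjective; hence C is a Dedekind-finite M-Set containing a Dedekind-infinite sub-M-Set. -/
/-- The action on `B` in which every generator `mₙ` acts by the shift `bₖ ↦ bₖ₊₁`. -/
def bact (_n : ℕ) (k : ℕ) : ℕ := k + 1

/-- `B` is a sub-M-Set of `C` (closed under every generator), the M-Set `C` is
Dedekind-finite (every injective equivariant endomorphism is bijective), and `B`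
(with the shift action) admits an injective equivariant endomorphism that is not
surjective, i.e. `B` is a Dedekind-infinite sub-M-Set of the Dedekind-finite `C`. -/
theorem dedekind_finite_with_dedekind_infinite_sub :
    (∀ n k, ∃ j, act n (Sum.inr k) = Sum.inr j) ∧
    (∀ F : ℕ ⊕ ℕ → ℕ ⊕ ℕ, Function.Injective F →
      (∀ n x, F (act n x) = act n (F x)) → Function.Bijective F) ∧
    (∃ G : ℕ → ℕ, Function.Injective G ∧ ¬ Function.Surjective G ∧
      ∀ n k, G (bact n k) = bact n (G k)) := by
  refine ⟨fun n k => ⟨k, rfl⟩, ?_, ⟨fun k => k + 1, fun a b h => by simpa using h,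
    fun hs => by obtain ⟨x, hx⟩ := hs 0; simp at hx, fun n k => rfl⟩⟩
  intro F hinj heq
  have hl : ∀ k, F (Sum.inl k) = Sum.inl k := by
    intro k
    match h : F (Sum.inl k) with
    | Sum.inl j =>
      by_cases hjk : j = k
      · rw [hjk]
      · have h2 := heq j (Sum.inl k)
        have hkj : k ≠ j := fun e => hjk e.symm
        rw [show act j (Sum.inl k) = Sum.inl k by simp [act, hkj], h] at h2
        simp [act] at h2
    | Sum.inr m =>
      have h2 := heq k (Sum.inl k)
      rw [show act k (Sum.inl k) = Sum.inr k by simp [act], h] at h2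
      simp only [act] at h2
      exact absurd (hinj (h.trans h2.symm)) (by simp)
  have hr : ∀ k, F (Sum.inr k) = Sum.inr k := by
    intro k
    have h2 := heq k (Sum.inl k)
    rw [show act k (Sum.inl k) = Sum.inr k by simp [act], hl k] at h2
    simpa [act] using h2
  have hF : F = id := by funext x; cases x <;> simp [hl, hr]
  rw [hF]; exact Function.bijective_id
end

section
/- Let M and C' = A ∪ B ∪ D be as follows: A = {a_n}, B = {b_n}, D = {c_n} pairwise disjoint countable sets, with action m_n : a_n ↦ b_n, b_n ↦ c_n, fixing all other a_k, b_k (k ≠ n) and all c_k. Then every injective M-equivariant endomorphism of C' is the identity, so C' is Dedekind-finite as an M-Set. -/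
/-- Generator action of the free monoid on `C' = A ⊕ B ⊕ D`
(`Sum.inl n = aₙ`, `Sum.inr (Sum.inl n) = bₙ`, `Sum.inr (Sum.inr n) = cₙ`):
`mₙ` sends `aₙ ↦ bₙ`, `bₙ ↦ cₙ`, fixes all other `aₖ`, `bₖ` (`k ≠ n`) and all `cₖ`. -/
def act2 (n : ℕ) : ℕ ⊕ (ℕ ⊕ ℕ) → ℕ ⊕ (ℕ ⊕ ℕ)
  | Sum.inl k => if k = n then Sum.inr (Sum.inl n) else Sum.inl k
  | Sum.inr (Sum.inl k) =>
      if k = n then Sum.inr (Sum.inr n) else Sum.inr (Sum.inl k)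
  | Sum.inr (Sum.inr k) => Sum.inr (Sum.inr k)

/-- Every injective M-equivariant endomorphism of `C'` is the identity; in particular
`C'` is Dedekind-finite as an M-Set. -/
theorem every_injective_equivariant_is_id'
    (F : ℕ ⊕ (ℕ ⊕ ℕ) → ℕ ⊕ (ℕ ⊕ ℕ))
    (hinj : Function.Injective F)
    (hequiv : ∀ n x, F (act2 n x) = act2 n (F x)) :
    F = id := by
  have keyA : ∀ n, F (Sum.inl n) = Sum.inl n := by
    intro n
    have e1 : act2 n (Sum.inl n) = Sum.inr (Sum.inl n) := by simp [act2]
    have e2 : act2 n (Sum.inr (Sum.inl n)) = Sum.inr (Sum.inr n) := by simp [act2]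
    have hb : F (Sum.inr (Sum.inl n)) = act2 n (F (Sum.inl n)) := by
      have h := hequiv n (Sum.inl n); rwa [e1] at h
    have hc : F (Sum.inr (Sum.inr n)) = act2 n (act2 n (F (Sum.inl n))) := by
      have h := hequiv n (Sum.inr (Sum.inl n)); rw [e2] at h; rw [h, hb]
    have hne1 : act2 n (F (Sum.inl n)) ≠ F (Sum.inl n) := by
      rw [← hb]
      intro h
      exact (by simp : (Sum.inr (Sum.inl n) : ℕ ⊕ (ℕ ⊕ ℕ)) ≠ Sum.inl n) (hinj h)
    have hne2 : act2 n (act2 n (F (Sum.inl n))) ≠ act2 n (F (Sum.inl n)) := by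
      rw [← hc, ← hb]
      intro h
      exact (by simp : (Sum.inr (Sum.inr n) : ℕ ⊕ (ℕ ⊕ ℕ)) ≠ Sum.inr (Sum.inl n)) (hinj h)
    rcases hy : F (Sum.inl n) with k | k | k
    · rw [hy] at hne1
      by_cases hk : k = n
      · rw [hk]
      · simp [act2, hk] at hne1
    · rw [hy] at hne1 hne2
      by_cases hk : k = n
      · subst hk
        simp [act2] at hne2
      · simp [act2, hk] at hne1
    · rw [hy] at hne1
      simp [act2] at hne1
  have keyB : ∀ n, F (Sum.inr (Sum.inl n)) = Sum.inr (Sum.inl n) := by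
    intro n
    have := hequiv n (Sum.inl n)
    simp [act2, keyA n] at this
    exact this
  have keyC : ∀ n, F (Sum.inr (Sum.inr n)) = Sum.inr (Sum.inr n) := by
    intro n
    have := hequiv n (Sum.inr (Sum.inl n))
    simp [act2, keyB n] at this
    exact this
  funext x
  rcases x with k | k | k
  · exact keyA k
  · exact keyB k
  · exact keyC k
end
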